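/- arXiv:2603.14178 — 2 statements merged into one kernel-verified Lean document; each statement's English description precedes it below -/
import Mathlib

section
/- Interface coercivity (lower bound): the hybrid energy E_α(u) = E_cc(v) + 2 E_cd(v,a) + E_dd(a) satisfies E_α(u) ≥ [v]²_{H^α(0,1)} + 2c₁ Σ_{k=2}^{N+1} |a_k - v̄|² + 2c₁ N ‖v - v̄‖²_{L²(0,1)}, with c₁ = (N+1)^{-(1+2α)} and v̄ = ∫_0^1 v dx. -/
open Finset Set MeasureTheory

/-- Gagliardo (continuous–continuous) part of the hybrid energy. -/
noncomputable def Ecc (α : ℝ) (v : ℝ → ℝ) : ℝ :=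
  ∫ x in Set.Ioc (0 : ℝ) 1, ∫ y in Set.Ioc (0 : ℝ) 1,
    (v x - v y) ^ 2 / |x - y| ^ (1 + 2 * α)

/-- Continuous–discrete (interface) part of the hybrid energy. -/
noncomputable def Ecd (N : ℕ) (α : ℝ) (v : ℝ → ℝ) (a : ℕ → ℝ) : ℝ :=
  ∑ k ∈ Finset.Icc 2 (N + 1),
    ∫ x in Set.Ioc (0 : ℝ) 1, (a k - v x) ^ 2 / |(k : ℝ) - x| ^ (1 + 2 * α)

/-- Discrete–discrete part of the hybrid energy. -/
noncomputable def Edd (N : ℕ) (α : ℝ) (a : ℕ → ℝ) : ℝ :=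
  ∑ i ∈ Finset.Icc 2 (N + 1), ∑ j ∈ Finset.Icc 2 (N + 1),
    if i = j then 0 else (a i - a j) ^ 2 / |(i : ℝ) - (j : ℝ)| ^ (1 + 2 * α)

/-!
On `(0, 1]` every interface kernel `|k - x| ^ -(1 + 2α)` with `2 ≤ k ≤ N + 1` is at least
`c₁ = (N + 1) ^ -(1 + 2α)`, so each of the `N` interface integrals dominates
`c₁ ∫₀¹ (a_k - v)²`. Since `(0, 1]` has unit length, `∫₀¹ (a_k - v)² = (a_k - v̄)² + ‖v - v̄‖²`
(variance decomposition), and `E_dd ≥ 0`.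
-/

open ProbabilityTheory

instance : IsProbabilityMeasure (volume.restrict (Ioc (0 : ℝ) 1)) :=
  ⟨by simp⟩

lemma integral_const_sub_sq {Ω : Type*} {_ : MeasurableSpace Ω} {μ : Measure Ω}
    [IsProbabilityMeasure μ] {f : Ω → ℝ} (hf : MemLp f 2 μ) (b : ℝ) :
    ∫ x, (b - f x) ^ 2 ∂μ = (b - ∫ x, f x ∂μ) ^ 2 + ∫ x, (f x - ∫ y, f y ∂μ) ^ 2 ∂μ := by
  have hvar := variance_eq_sub (X := fun x => b - f x) ((memLp_const b).sub hf)
  rw [variance_const_sub hf.aestronglyMeasurable, variance_eq_integral hf.aemeasurable,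
    integral_sub (integrable_const b) (hf.integrable one_le_two), integral_const,
    probReal_univ, one_smul] at hvar
  simp only [Pi.pow_apply] at hvar
  linarith

lemma inv_mul_setIntegral_le_setIntegral_div {Ω : Type*} {_ : MeasurableSpace Ω}
    {μ : Measure Ω} {s : Set Ω} (hs : MeasurableSet s) {g w : Ω → ℝ} {M : ℝ}
    (hg : IntegrableOn g s μ) (hg0 : ∀ x ∈ s, 0 ≤ g x) (hw : Measurable w)
    (hw1 : ∀ x ∈ s, 1 ≤ w x) (hwM : ∀ x ∈ s, w x ≤ M) :
    M⁻¹ * ∫ x in s, g x ∂μ ≤ ∫ x in s, g x / w x ∂μ := by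
  have hdiv : IntegrableOn (fun x => g x / w x) s μ := by
    refine Integrable.mono hg (hg.aemeasurable.div hw.aemeasurable).aestronglyMeasurable ?_
    filter_upwards [ae_restrict_mem hs] with x hx
    rw [Real.norm_of_nonneg (div_nonneg (hg0 x hx) (by linarith [hw1 x hx]))]
    exact (div_le_self (hg0 x hx) (hw1 x hx)).trans (le_abs_self _)
  rw [← integral_const_mul]
  refine setIntegral_mono_on (hg.const_mul _) hdiv hs fun x hx => ?_
  rw [inv_mul_eq_div]
  exact div_le_div_of_nonneg_left (hg0 x hx) (by linarith [hw1 x hx]) (hwM x hx)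

lemma rpow_abs_natCast_sub_mem_Icc {N k : ℕ} {p x : ℝ} (hp : 0 ≤ p)
    (hk : k ∈ Finset.Icc 2 (N + 1)) (hx : x ∈ Ioc (0 : ℝ) 1) :
    |(k : ℝ) - x| ^ p ∈ Set.Icc 1 (((N : ℝ) + 1) ^ p) := by
  rw [Finset.mem_Icc] at hk
  have hk2 : (2 : ℝ) ≤ k := by exact_mod_cast hk.1
  have hkN : (k : ℝ) ≤ N + 1 := by exact_mod_cast hk.2
  rw [abs_of_nonneg (by linarith [hx.2])]
  exact ⟨Real.one_le_rpow (by linarith [hx.2]) hp,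
    Real.rpow_le_rpow (by linarith [hx.2]) (by linarith [hx.1]) hp⟩

lemma Edd_nonneg (N : ℕ) (α : ℝ) (a : ℕ → ℝ) : 0 ≤ Edd N α a := by
  refine Finset.sum_nonneg fun i _ => Finset.sum_nonneg fun j _ => ?_
  split_ifs
  · exact le_rfl
  · positivity

theorem stmt_7_general (N : ℕ) (α : ℝ) (hα : 0 < α)
    (v : ℝ → ℝ) (a : ℕ → ℝ)
    (hv1 : IntegrableOn v (Set.Ioc (0 : ℝ) 1))
    (hv2 : IntegrableOn (fun x => (v x) ^ 2) (Set.Ioc (0 : ℝ) 1)) :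
    Ecc α v + 2 * Ecd N α v a + Edd N α a ≥
      Ecc α v +
        2 * (1 / ((N : ℝ) + 1) ^ (1 + 2 * α)) *
          (∑ k ∈ Finset.Icc 2 (N + 1), (a k - ∫ x in Set.Ioc (0 : ℝ) 1, v x) ^ 2) +
        2 * (1 / ((N : ℝ) + 1) ^ (1 + 2 * α)) * (N : ℝ) *
          ∫ x in Set.Ioc (0 : ℝ) 1, (v x - ∫ y in Set.Ioc (0 : ℝ) 1, v y) ^ 2 := by
  set p : ℝ := 1 + 2 * α
  set c : ℝ := 1 / ((N : ℝ) + 1) ^ p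
  set μ := volume.restrict (Ioc (0 : ℝ) 1)
  set vbar : ℝ := ∫ x, v x ∂μ
  set I : ℝ := ∫ x, (v x - vbar) ^ 2 ∂μ
  have hvL2 : MemLp v 2 μ := (memLp_two_iff_integrable_sq hv1.aestronglyMeasurable).2 hv2
  have hp : 0 ≤ p := by positivity
  have hinterface : ∀ k ∈ Finset.Icc 2 (N + 1),
      c * ((a k - vbar) ^ 2 + I) ≤ ∫ x, (a k - v x) ^ 2 / |(k : ℝ) - x| ^ p ∂μ := by
    intro k hk
    rw [← integral_const_sub_sq hvL2, show c = (((N : ℝ) + 1) ^ p)⁻¹ from one_div _]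
    exact inv_mul_setIntegral_le_setIntegral_div measurableSet_Ioc
      ((memLp_const (a k)).sub hvL2).integrable_sq (fun _ _ => sq_nonneg _)
      (by fun_prop : Continuous fun x : ℝ => |(k : ℝ) - x| ^ p).measurable
      (fun x hx => (rpow_abs_natCast_sub_mem_Icc hp hk hx).1)
      (fun x hx => (rpow_abs_natCast_sub_mem_Icc hp hk hx).2)
  have hEcd : c * ∑ k ∈ Finset.Icc 2 (N + 1), (a k - vbar) ^ 2 + c * N * I ≤ Ecd N α v a := by
    calc c * ∑ k ∈ Finset.Icc 2 (N + 1), (a k - vbar) ^ 2 + c * N * I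
        = ∑ k ∈ Finset.Icc 2 (N + 1), c * ((a k - vbar) ^ 2 + I) := by
          simp only [mul_add, Finset.sum_add_distrib, Finset.mul_sum, Finset.sum_const,
            Nat.card_Icc, nsmul_eq_mul]
          push_cast
          ring
      _ ≤ Ecd N α v a := Finset.sum_le_sum hinterface
  linarith [Edd_nonneg N α a]

/-- Interface coercivity (lower bound): with `c₁ = (N+1)^{-(1+2α)}` and `v̄ = ∫₀¹ v`,
`E_α(u) = E_cc + 2E_cd + E_dd ≥ [v]² + 2c₁ Σ_k |a_k - v̄|² + 2c₁N ‖v - v̄‖²`. -/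
theorem stmt_7 (N : ℕ) (hN : 2 ≤ N) (α : ℝ) (hα : 0 < α) (hα1 : α < 1)
    (v : ℝ → ℝ) (a : ℕ → ℝ)
    (hv1 : IntegrableOn v (Set.Ioc (0 : ℝ) 1))
    (hv2 : IntegrableOn (fun x => (v x) ^ 2) (Set.Ioc (0 : ℝ) 1)) :
    Ecc α v + 2 * Ecd N α v a + Edd N α a ≥
      Ecc α v +
        2 * (1 / ((N : ℝ) + 1) ^ (1 + 2 * α)) *
          (∑ k ∈ Finset.Icc 2 (N + 1), (a k - ∫ x in Set.Ioc (0 : ℝ) 1, v x) ^ 2) +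
        2 * (1 / ((N : ℝ) + 1) ^ (1 + 2 * α)) * (N : ℝ) *
          ∫ x in Set.Ioc (0 : ℝ) 1, (v x - ∫ y in Set.Ioc (0 : ℝ) 1, v y) ^ 2 :=
  stmt_7_general N α hα v a hv1 hv2
end

section
/- Interface coercivity (upper bound): there exists a constant C₂ > 0 depending only on α and N such that E_α(u) = E_cc(v) + 2E_cd(v,a) + E_dd(a) ≤ C₂ ([v]²_{H^α(0,1)} + ‖v - v̄‖²_{L²(0,1)} + Σ_{k=2}^{N+1} |a_k - v̄|²). -/
open Finset Set MeasureTheory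

/-! Every discrete node `k ≥ 2` lies at distance at least `1` from `(0, 1]` and from every other
node, so all interaction kernels of `Ecd` and `Edd` are at most `1`. Both parts are then
controlled by the elementary bound `(x - y)² ≤ 2 (x - m)² + 2 (y - m)²` with `m = v̄`, while
`Ecc` appears on both sides. -/

lemma div_abs_rpow_le_self {p d q : ℝ} (hp : 0 ≤ p) (hd : 1 ≤ |d|) (hq : 0 ≤ q) :
    q / |d| ^ p ≤ q :=
  div_le_self hq (Real.one_le_rpow hd hp)

lemma sq_sub_le_two_mul_sq_add (x y m : ℝ) :
    (x - y) ^ 2 ≤ 2 * (x - m) ^ 2 + 2 * (y - m) ^ 2 := by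
  have := add_sq_le (a := x - m) (b := m - y)
  nlinarith

lemma card_Icc_two_succ (N : ℕ) : (Finset.Icc 2 (N + 1)).card = N := by
  rw [Nat.card_Icc]; omega

lemma Ecc_nonneg (α : ℝ) (v : ℝ → ℝ) : 0 ≤ Ecc α v :=
  integral_nonneg fun _ => integral_nonneg fun _ => by positivity

section Probability

variable {Ω : Type*} [MeasurableSpace Ω] {μ : Measure Ω} [IsProbabilityMeasure μ]

lemma integral_const_sub_sq_le {v : Ω → ℝ} (hv : MemLp v 2 μ) (c m : ℝ) :
    ∫ x, (c - v x) ^ 2 ∂μ ≤ 2 * (c - m) ^ 2 + 2 * ∫ x, (v x - m) ^ 2 ∂μ := by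
  have hsq : Integrable (fun x => (v x - m) ^ 2) μ := (hv.sub (memLp_const m)).integrable_sq
  calc ∫ x, (c - v x) ^ 2 ∂μ ≤ ∫ x, (2 * (c - m) ^ 2 + 2 * (v x - m) ^ 2) ∂μ := by
        exact integral_mono ((memLp_const c).sub hv).integrable_sq
          ((integrable_const _).add (hsq.const_mul 2)) fun x => sq_sub_le_two_mul_sq_add _ _ m
    _ = 2 * (c - m) ^ 2 + 2 * ∫ x, (v x - m) ^ 2 ∂μ := by
        rw [integral_add (integrable_const _) (hsq.const_mul 2), integral_const,
          integral_const_mul, probReal_univ, one_smul]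

end Probability

instance : IsProbabilityMeasure (volume.restrict (Set.Ioc (0 : ℝ) 1)) :=
  ⟨by simp⟩

lemma Ecd_le (N : ℕ) {α : ℝ} (hα : 0 ≤ 1 + 2 * α) {v : ℝ → ℝ}
    (hv : MemLp v 2 (volume.restrict (Set.Ioc 0 1))) (a : ℕ → ℝ) (m : ℝ) :
    Ecd N α v a ≤ 2 * ∑ k ∈ Finset.Icc 2 (N + 1), (a k - m) ^ 2 +
      2 * N * ∫ x in Set.Ioc (0 : ℝ) 1, (v x - m) ^ 2 := by
  have hk : ∀ k ∈ Finset.Icc 2 (N + 1),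
      ∫ x in Set.Ioc (0 : ℝ) 1, (a k - v x) ^ 2 / |(k : ℝ) - x| ^ (1 + 2 * α) ≤
        2 * (a k - m) ^ 2 + 2 * ∫ x in Set.Ioc (0 : ℝ) 1, (v x - m) ^ 2 := by
    intro k hk
    have hk2 : (2 : ℝ) ≤ k := by exact_mod_cast (Finset.mem_Icc.1 hk).1
    refine le_trans ?_ (integral_const_sub_sq_le hv (a k) m)
    refine integral_mono_of_nonneg (.of_forall fun _ => by positivity)
      ((memLp_const (a k)).sub hv).integrable_sq ?_
    filter_upwards [ae_restrict_mem measurableSet_Ioc] with x hx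
    refine div_abs_rpow_le_self hα ?_ (sq_nonneg _)
    rw [abs_of_nonneg (by linarith [hx.2])]
    linarith [hx.2]
  calc Ecd N α v a ≤ ∑ k ∈ Finset.Icc 2 (N + 1),
        (2 * (a k - m) ^ 2 + 2 * ∫ x in Set.Ioc (0 : ℝ) 1, (v x - m) ^ 2) :=
        Finset.sum_le_sum hk
    _ = _ := by
        rw [Finset.sum_add_distrib, ← Finset.mul_sum, Finset.sum_const, card_Icc_two_succ,
          nsmul_eq_mul]
        ring

lemma Edd_le (N : ℕ) {α : ℝ} (hα : 0 ≤ 1 + 2 * α) (a : ℕ → ℝ) (m : ℝ) :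
    Edd N α a ≤ 4 * N * ∑ k ∈ Finset.Icc 2 (N + 1), (a k - m) ^ 2 := by
  have hij : ∀ i j : ℕ,
      (if i = j then (0 : ℝ) else (a i - a j) ^ 2 / |(i : ℝ) - (j : ℝ)| ^ (1 + 2 * α)) ≤
        2 * (a i - m) ^ 2 + 2 * (a j - m) ^ 2 := by
    intro i j
    split_ifs with h
    · positivity
    · have hd : (1 : ℝ) ≤ |(i : ℝ) - (j : ℝ)| := by
        exact_mod_cast Int.one_le_abs (sub_ne_zero.2 (Int.ofNat_inj.not.2 h))
      exact (div_abs_rpow_le_self hα hd (sq_nonneg _)).trans (sq_sub_le_two_mul_sq_add _ _ m)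
  calc Edd N α a ≤ ∑ i ∈ Finset.Icc 2 (N + 1), ∑ j ∈ Finset.Icc 2 (N + 1),
        (2 * (a i - m) ^ 2 + 2 * (a j - m) ^ 2) :=
        Finset.sum_le_sum fun i _ => Finset.sum_le_sum fun j _ => hij i j
    _ = _ := by
        simp only [Finset.sum_add_distrib, Finset.sum_const, card_Icc_two_succ, nsmul_eq_mul,
          ← Finset.mul_sum]
        ring

theorem stmt_8_general (N : ℕ) (α : ℝ) (hα : 0 < α) :
    ∃ C₂ : ℝ, 0 < C₂ ∧ ∀ (v : ℝ → ℝ) (a : ℕ → ℝ),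
      IntegrableOn v (Set.Ioc (0 : ℝ) 1) →
      IntegrableOn (fun x => (v x) ^ 2) (Set.Ioc (0 : ℝ) 1) →
      Ecc α v + 2 * Ecd N α v a + Edd N α a ≤
        C₂ * (Ecc α v +
          (∫ x in Set.Ioc (0 : ℝ) 1, (v x - ∫ y in Set.Ioc (0 : ℝ) 1, v y) ^ 2) +
          ∑ k ∈ Finset.Icc 2 (N + 1), (a k - ∫ x in Set.Ioc (0 : ℝ) 1, v x) ^ 2) := by
  refine ⟨4 * N + 4, by positivity, fun v a hv hv2 => ?_⟩
  set m := ∫ x in Set.Ioc (0 : ℝ) 1, v x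
  have hexp : 0 ≤ 1 + 2 * α := by linarith
  have hvL2 : MemLp v 2 (volume.restrict (Set.Ioc 0 1)) :=
    (memLp_two_iff_integrable_sq hv.aestronglyMeasurable).2 hv2
  have hEcd := Ecd_le N hexp hvL2 a m
  have hEdd := Edd_le N hexp a m
  have hEcc := Ecc_nonneg α v
  have hL : 0 ≤ ∫ x in Set.Ioc (0 : ℝ) 1, (v x - m) ^ 2 := integral_nonneg fun _ => sq_nonneg _
  have hS : 0 ≤ ∑ k ∈ Finset.Icc 2 (N + 1), (a k - m) ^ 2 :=
    Finset.sum_nonneg fun _ _ => sq_nonneg _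
  have hN : (0 : ℝ) ≤ N := N.cast_nonneg
  nlinarith [mul_nonneg hN hEcc, mul_nonneg hN hL, mul_nonneg hN hS]

/-- Interface coercivity (upper bound): there is `C₂ > 0`, depending only on `α` and `N`,
with `E_α(u) ≤ C₂([v]² + ‖v - v̄‖² + Σ_k |a_k - v̄|²)`. -/
theorem stmt_8 (N : ℕ) (hN : 2 ≤ N) (α : ℝ) (hα : 0 < α) (hα1 : α < 1) :
    ∃ C₂ : ℝ, 0 < C₂ ∧ ∀ (v : ℝ → ℝ) (a : ℕ → ℝ),
      IntegrableOn v (Set.Ioc (0 : ℝ) 1) →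
      IntegrableOn (fun x => (v x) ^ 2) (Set.Ioc (0 : ℝ) 1) →
      Ecc α v + 2 * Ecd N α v a + Edd N α a ≤
        C₂ * (Ecc α v +
          (∫ x in Set.Ioc (0 : ℝ) 1, (v x - ∫ y in Set.Ioc (0 : ℝ) 1, v y) ^ 2) +
          ∑ k ∈ Finset.Icc 2 (N + 1), (a k - ∫ x in Set.Ioc (0 : ℝ) 1, v x) ^ 2) :=
  stmt_8_general N α hα
end
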